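/- arXiv:2411.19188 — 2 statements merged into one kernel-verified Lean document; each statement's English description precedes it below -/
import Mathlib

section
/- Let T be a proper binary tree with saturated vertices u and w such that R_T(u) = R_T(w). Let u_1, w_1 be the respective siblings of u and w, u_0, w_0 their respective parents, and assume u_0 is an ancestor of w_0. Suppose R_T(w_1) ≤ R_T(u) − 1. Suppose further that either u_0 is the root of T, or u_0 is not the root, u_0 v_1 v_2 ⋯ v_t is the path from u_0 to the root v_t, and R_T(v_1) ≤ 2 + R_T(w_1). Then the proper binary tree T* obtained from T by deleting the edges uu_0 and w_1w_0 and adding the edges uw_0 and w_1u_0 (i.e., exchanging the subtrees T(u) and T(w_1)) satisfies R(T*) ≥ R(T). -/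
/-- Proper binary trees: every internal vertex has exactly two children. -/
inductive BTree : Type
  | leaf : BTree
  | node : BTree → BTree → BTree
  deriving DecidableEq

namespace BTree

/-- The rank (protection number) of the root of a proper binary tree:
the minimum distance from the root to a leaf descendant. -/
def rank : BTree → ℕ
  | leaf => 0
  | node l r => min l.rank r.rank + 1

/-- The security of a proper binary tree: the sum of the ranks of all vertices. -/
def security : BTree → ℕ
  | leaf => 0
  | node l r => (node l r).rank + l.security + r.security

/-- The number of leaves. -/
def leafCount : BTree → ℕ
  | leaf => 1
  | node l r => l.leafCount + r.leafCount

/-- The height: maximum distance from the root to a leaf. -/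
def height : BTree → ℕ
  | leaf => 0
  | node l r => max l.height r.height + 1

/-- A tree is complete if all leaves are at the same depth. -/
def IsComplete : BTree → Prop
  | leaf => True
  | node l r => IsComplete l ∧ IsComplete r ∧ l.height = r.height

/-- The subtree at a given position (a list of directions from the root;
`false` = first child, `true` = second child), if the position exists. -/
def subtreeAt : BTree → List Bool → Option BTree
  | t, [] => some t
  | leaf, _ :: _ => none
  | node l _, false :: p => subtreeAt l p
  | node _ r, true :: p => subtreeAt r p

/-- Replace the subtree at a given position by `s`. -/
def replaceAt : BTree → List Bool → BTree → BTree
  | _, [], s => s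
  | leaf, _ :: _, _ => leaf
  | node l r, false :: p, s => node (replaceAt l p s) r
  | node l r, true :: p, s => node l (replaceAt r p s)

/-- The rank of the vertex at position `p` in `T` (rank of a vertex only depends
on the subtree consisting of the vertex and its descendants). -/
def rankAt (T : BTree) (p : List Bool) : ℕ := ((T.subtreeAt p).map rank).getD 0

/-- The vertex at position `p` in `T` is saturated: its subtree is complete, but the
subtree of none of its (proper) ancestors is complete. -/
def Saturated (T : BTree) (p : List Bool) : Prop :=
  (∃ s, T.subtreeAt p = some s ∧ IsComplete s) ∧
  ∀ q s, q <+: p → q ≠ p → T.subtreeAt q = some s → ¬ IsComplete s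

/-- The complete binary tree of height `m` (with `2 ^ m` leaves). -/
def completeTree : ℕ → BTree
  | 0 => leaf
  | m + 1 => node (completeTree m) (completeTree m)

/-- The tree `T_L` for `L = (n₁, …, n_k)`: a binary caterpillar whose spine vertices carry
complete binary trees with `2 ^ nᵢ` leaves. -/
def TL : List ℕ → BTree
  | [] => leaf
  | n :: ns => ns.foldl (fun acc m => node acc (completeTree m)) (completeTree n)

/-- Helper for the almost complete tree: a complete binary tree of height `m`
whose leftmost `r` leaves each receive two leaf children. -/
def buildF : ℕ → ℕ → BTree
  | 0, r => if r = 0 then leaf else node leaf leaf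
  | m + 1, r => node (buildF m (min r (2 ^ m))) (buildF m (r - 2 ^ m))

/-- The almost complete ("good") tree `F(ℓ)` on `ℓ` leaves. -/
def F (ℓ : ℕ) : BTree := buildF (Nat.log 2 ℓ) (ℓ - 2 ^ Nat.log 2 ℓ)

end BTree


/-!
Let `A` be the subtree at `u₀`, with children `T(u)` and `T(u₁)`. Since `T(u)` is complete and `w`
is saturated, `w₀` lies in `T(u₁)`. The exchange turns `A` into `A'`, with children `T(w₁)` and
`T(u₁)'`, where `T(u₁)'` is `T(u₁)` with `T(w₁)` replaced by `T(u)`. In `T(u₁)'` the rank of `w₀`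
rises from `R_T(w₁) + 1` to `R_T(u) + 1` and no rank decreases, so the vertices outside the moved
subtrees gain at least `R_T(u) - R_T(w₁)`, which covers any loss of rank at `u₀`; hence
`R(A) ≤ R(A')`. The rank of `u₀` can only drop to `R_T(w₁) + 1`, and then `R_T(v₁) ≤ 2 + R_T(w₁)`
means that `v₁`, and so every higher ancestor, keeps its rank.
-/

namespace BTree

def nodeDir : Bool → BTree → BTree → BTree
  | false, a, b => node a b
  | true, a, b => node b a

@[simp]
theorem subtreeAt_nil (T : BTree) : T.subtreeAt [] = some T := by
  cases T <;> rfl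

@[simp]
theorem replaceAt_nil (T s : BTree) : T.replaceAt [] s = s := by
  cases T <;> rfl

section nodeDir

variable (d : Bool) (a b c : BTree) (z : List Bool)

@[simp]
theorem rank_nodeDir : (nodeDir d a b).rank = min a.rank b.rank + 1 := by
  cases d <;> simp [nodeDir, rank, min_comm]

theorem security_nodeDir :
    (nodeDir d a b).security = min a.rank b.rank + 1 + a.security + b.security := by
  cases d
  · rfl
  · simp only [nodeDir, security, rank]; omega

@[simp]
theorem subtreeAt_nodeDir_cons_self : (nodeDir d a b).subtreeAt (d :: z) = a.subtreeAt z := by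
  cases d <;> rfl

@[simp]
theorem subtreeAt_nodeDir_cons_not : (nodeDir d a b).subtreeAt ((!d) :: z) = b.subtreeAt z := by
  cases d <;> rfl

@[simp]
theorem replaceAt_nodeDir_cons_self :
    (nodeDir d a b).replaceAt (d :: z) c = nodeDir d (a.replaceAt z c) b := by
  cases d <;> rfl

@[simp]
theorem replaceAt_nodeDir_cons_not :
    (nodeDir d a b).replaceAt ((!d) :: z) c = nodeDir d a (b.replaceAt z c) := by
  cases d <;> rfl

end nodeDir

theorem subtreeAt_append (T : BTree) (p q : List Bool) :
    T.subtreeAt (p ++ q) = (T.subtreeAt p).bind (·.subtreeAt q) := by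
  induction p generalizing T with
  | nil => simp
  | cons d p ih => cases T <;> cases d <;> simp [subtreeAt, ih]

theorem subtreeAt_append_of_subtreeAt {T A : BTree} {p : List Bool} (hA : T.subtreeAt p = some A)
    (q : List Bool) : T.subtreeAt (p ++ q) = A.subtreeAt q := by
  simp [subtreeAt_append, hA]

theorem exists_subtreeAt_eq_nodeDir {T a : BTree} {p : List Bool} {d : Bool}
    (ha : T.subtreeAt (p ++ [d]) = some a) : ∃ b, T.subtreeAt p = some (nodeDir d a b) := by
  rw [subtreeAt_append] at ha
  obtain ⟨A, hA, hAa⟩ := Option.bind_eq_some_iff.mp ha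
  cases A <;> cases d <;> simp only [subtreeAt, reduceCtorEq, Option.some.injEq] at hAa
  all_goals subst hAa; exact ⟨_, hA⟩

theorem subtreeAt_eq_nodeDir {T a b : BTree} {p : List Bool} {d : Bool}
    (ha : T.subtreeAt (p ++ [d]) = some a) (hb : T.subtreeAt (p ++ [!d]) = some b) :
    T.subtreeAt p = some (nodeDir d a b) := by
  obtain ⟨b', hA⟩ := exists_subtreeAt_eq_nodeDir ha
  rw [subtreeAt_append_of_subtreeAt hA, subtreeAt_nodeDir_cons_not, subtreeAt_nil,
    Option.some.injEq] at hb
  rwa [← hb]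

theorem replaceAt_append {T A : BTree} {p : List Bool} (hA : T.subtreeAt p = some A)
    (q : List Bool) (s : BTree) : T.replaceAt (p ++ q) s = T.replaceAt p (A.replaceAt q s) := by
  induction p generalizing T with
  | nil => simp_all
  | cons d p ih => cases T <;> cases d <;> simp_all [subtreeAt, replaceAt]

theorem subtreeAt_replaceAt_self {T A : BTree} {p : List Bool} (hA : T.subtreeAt p = some A)
    (s : BTree) : (T.replaceAt p s).subtreeAt p = some s := by
  induction p generalizing T with
  | nil => simp
  | cons d p ih => cases T <;> cases d <;> simp_all [subtreeAt, replaceAt]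

theorem replaceAt_replaceAt (T a b : BTree) (p : List Bool) :
    (T.replaceAt p a).replaceAt p b = T.replaceAt p b := by
  induction p generalizing T with
  | nil => simp
  | cons d p ih => cases T <;> cases d <;> simp [replaceAt, ih]

theorem replaceAt_replaceAt_nodeDir {T a C : BTree} {p : List Bool} {d : Bool}
    (hA : T.subtreeAt p = some (nodeDir d a C)) (q : List Bool) (a' s : BTree) :
    (T.replaceAt (p ++ [d]) a').replaceAt (p ++ (!d) :: q) s =
      T.replaceAt p (nodeDir d a' (C.replaceAt q s)) := by
  rw [replaceAt_append hA, replaceAt_append (subtreeAt_replaceAt_self hA _), replaceAt_replaceAt,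
    replaceAt_nodeDir_cons_self, replaceAt_nodeDir_cons_not, replaceAt_nil]

theorem rank_le_rank_replaceAt {C W W' : BTree} {q : List Bool} (hW : C.subtreeAt q = some W)
    (hr : W.rank ≤ W'.rank) : C.rank ≤ (C.replaceAt q W').rank := by
  induction q generalizing C with
  | nil => simp_all
  | cons d q ih =>
    cases C with
    | leaf => cases hW
    | node l r =>
      cases d <;> (have := ih hW; simp only [replaceAt, rank]; omega)

theorem security_add_le_security_replaceAt {C W W' : BTree} {q : List Bool}
    (hW : C.subtreeAt q = some W) (hr : W.rank ≤ W'.rank) :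
    C.security + W'.security ≤ (C.replaceAt q W').security + W.security := by
  induction q generalizing C with
  | nil => simp_all [Nat.add_comm]
  | cons d q ih =>
    cases C with
    | leaf => cases hW
    | node l r =>
      cases d
      · have := ih hW; have := rank_le_rank_replaceAt (C := l) hW hr
        simp only [replaceAt, rank, security]; omega
      · have := ih hW; have := rank_le_rank_replaceAt (C := r) hW hr
        simp only [replaceAt, rank, security]; omega

theorem security_le_security_replaceAt_of_rank_le {T A A' : BTree} {p : List Bool}
    (hA : T.subtreeAt p = some A) (hsec : A.security ≤ A'.security) (hr : A.rank ≤ A'.rank) :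
    T.security ≤ (T.replaceAt p A').security := by
  have := security_add_le_security_replaceAt hA hr
  omega

/-- If the rank at `p` drops, the bound on the parent's rank forces the parent's minimum to be
attained at the other child, so no rank outside the subtree at `p` changes. -/
theorem security_le_security_replaceAt {T A A' : BTree} {p : List Bool}
    (hA : T.subtreeAt p = some A) (hsec : A.security ≤ A'.security)
    (hparent : A'.rank < A.rank → p ≠ [] → T.rankAt p.dropLast ≤ A'.rank + 1) :
    T.security ≤ (T.replaceAt p A').security := by
  rcases le_or_gt A.rank A'.rank with hr | hr
  · exact security_le_security_replaceAt_of_rank_le hA hsec hr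
  rcases List.eq_nil_or_concat' p with rfl | ⟨p, e, rfl⟩
  · simp only [subtreeAt_nil, Option.some.injEq] at hA
    simpa [hA] using hsec
  obtain ⟨s, hB⟩ := exists_subtreeAt_eq_nodeDir hA
  have hBr : min A.rank s.rank + 1 ≤ A'.rank + 1 := by
    simpa [rankAt, hB] using hparent hr (by simp)
  rw [replaceAt_append hB, replaceAt_nodeDir_cons_self]
  refine security_le_security_replaceAt_of_rank_le hB ?_
    (by simp only [rank_nodeDir, replaceAt_nil]; omega)
  simp only [security_nodeDir, replaceAt_nil]
  omega

section swap

variable {a b x C : BTree} {q : List Bool}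

theorem security_le_security_swap (d e : Bool) (hC : C.subtreeAt q = some (nodeDir e x b))
    (hba : b.rank ≤ a.rank) (hax : a.rank ≤ x.rank) :
    (nodeDir d a C).security ≤ (nodeDir d b (C.replaceAt q (nodeDir e x a))).security := by
  have hr : (nodeDir e x b).rank ≤ (nodeDir e x a).rank := by simp only [rank_nodeDir]; omega
  have hrank := rank_le_rank_replaceAt hC hr
  have hsec := security_add_le_security_replaceAt hC hr
  simp only [security_nodeDir] at hsec ⊢
  omega

theorem rank_le_rank_swap_or_eq (d e : Bool) (hC : C.subtreeAt q = some (nodeDir e x b))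
    (hba : b.rank ≤ a.rank) :
    (nodeDir d a C).rank ≤ (nodeDir d b (C.replaceAt q (nodeDir e x a))).rank ∨
      (nodeDir d b (C.replaceAt q (nodeDir e x a))).rank = b.rank + 1 := by
  have := rank_le_rank_replaceAt hC (W' := nodeDir e x a) (by simp only [rank_nodeDir]; omega)
  simp only [rank_nodeDir]
  omega

end swap

theorem Saturated.isComplete {T s : BTree} {p : List Bool} (hsat : Saturated T p)
    (hs : T.subtreeAt p = some s) : IsComplete s := by
  obtain ⟨s', hs', hc⟩ := hsat.1
  rw [hs, Option.some.injEq] at hs'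
  rwa [hs']

theorem Saturated.not_prefix {T s : BTree} {p q : List Bool} {e : Bool}
    (hsat : Saturated T (p ++ [e])) (hs : T.subtreeAt q = some s) (hc : IsComplete s) :
    ¬ q <+: p := fun hq =>
  hsat.2 q s (hq.trans (List.prefix_append _ _))
    (fun h => by subst h; simpa using hq.length_le) hs hc

theorem exists_eq_append_cons_not {p p' : List Bool} {d : Bool} (hp : p <+: p') (hne : p ≠ p')
    (hd : ¬ p ++ [d] <+: p') : ∃ q, p' = p ++ (!d) :: q := by
  obtain ⟨_ | ⟨c, q⟩, rfl⟩ := hp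
  · simp at hne
  · refine ⟨q, ?_⟩
    cases c <;> cases d <;> simp_all

end BTree

open BTree in
/-- Switching lemma (Lemma sw3): for saturated vertices `u` (at position `pu0 ++ [du]`,
with parent `u₀` at `pu0` and sibling `u₁`) and `w` (at position `pw0 ++ [dw]`, with parent
`w₀` at `pw0` and sibling `w₁`) of equal rank, where `u₀` is a (proper) ancestor of `w₀`,
if `R_T(w₁) ≤ R_T(u) − 1` and either `u₀` is the root, or `u₀` is not the root and its
parent `v₁` satisfies `R_T(v₁) ≤ 2 + R_T(w₁)`, then exchanging the subtrees `T(u)` and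
`T(w₁)` does not decrease the security. -/
theorem switching_lemma_three (T tu tw tu1 tw1 : BTree) (pu0 pw0 : List Bool) (du dw : Bool)
    (hu : T.subtreeAt (pu0 ++ [du]) = some tu)
    (hw : T.subtreeAt (pw0 ++ [dw]) = some tw)
    (hu1 : T.subtreeAt (pu0 ++ [!du]) = some tu1)
    (hw1 : T.subtreeAt (pw0 ++ [!dw]) = some tw1)
    (hsatu : Saturated T (pu0 ++ [du]))
    (hsatw : Saturated T (pw0 ++ [dw]))
    (hrank : tu.rank = tw.rank)
    (hanc : pu0 <+: pw0) (hanc' : pu0 ≠ pw0)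
    (hsib : tw1.rank + 1 ≤ tu.rank)
    (hroot : pu0 = [] ∨ (pu0 ≠ [] ∧ T.rankAt pu0.dropLast ≤ 2 + tw1.rank)) :
    T.security ≤ ((T.replaceAt (pu0 ++ [du]) tw1).replaceAt (pw0 ++ [!dw]) tu).security := by
  have hA := subtreeAt_eq_nodeDir hu hu1
  have hW := subtreeAt_eq_nodeDir hw hw1
  obtain ⟨q, rfl⟩ := exists_eq_append_cons_not hanc hanc'
    (hsatw.not_prefix hu (hsatu.isComplete hu))
  have hC : tu1.subtreeAt q = some (nodeDir dw tw tw1) := by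
    rwa [subtreeAt_append_of_subtreeAt hA, subtreeAt_nodeDir_cons_not] at hW
  have hba : tw1.rank ≤ tu.rank := by omega
  rw [List.append_assoc, List.cons_append, replaceAt_replaceAt_nodeDir hA,
    replaceAt_append hC, replaceAt_nodeDir_cons_not, replaceAt_nil]
  refine security_le_security_replaceAt hA
    (security_le_security_swap du dw hC hba hrank.le) fun hlt hne => ?_
  rcases rank_le_rank_swap_or_eq du dw hC hba with h | h
  · omega
  · rcases hroot with h0 | ⟨-, hv⟩
    · exact absurd h0 hne
    · omega
end

section
/- Let ℓ ≥ 2 have binary power representation L = (n_1, n_2, …, n_k) and let T_L be the corresponding maximal proper binary tree, where c_i denotes the root of the complete binary tree with 2^{n_i} leaves attached at v_i. If n_i = n_{i+1} + 1 for some fixed i with 2 ≤ i ≤ k−1, then R(T_L) = R(T*), where T* is obtained from T_L by deleting the edges v_{i+1}c_{i+1} and v_ic_i and adding the edges v_{i+1}c_i and v_ic_{i+1} (swapping the subtrees rooted at c_i and c_{i+1}). -/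
/-!
Along the spine of `T_L` the heights `nᵢ` decrease, so each spine vertex `vᵢ` with `i ≥ 2`
has rank `nᵢ + 1`, realised inside its pendant complete tree. Hence the security of `T_L` is
the sum of these ranks and of the securities of the pendant trees. Swapping `n_i = b + 1` and
`n_{i+1} = b` turns the ranks `(b + 2, b + 1)` of `v_i, v_{i+1}` into `(b + 1, b + 2)`, and
every later spine vertex keeps rank `n_j + 1` because `n_j < b`.
-/

namespace BTree

def spine (t : BTree) (ns : List ℕ) : BTree :=
  ns.foldl (fun acc m => node acc (completeTree m)) t

lemma TL_cons (n : ℕ) (ns : List ℕ) : TL (n :: ns) = spine (completeTree n) ns := rfl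

lemma spine_append (t : BTree) (ns ms : List ℕ) :
    spine t (ns ++ ms) = spine (spine t ns) ms :=
  List.foldl_append

lemma spine_cons (t : BTree) (m : ℕ) (ns : List ℕ) :
    spine t (m :: ns) = spine (node t (completeTree m)) ns := rfl

@[simp]
lemma rank_completeTree (m : ℕ) : (completeTree m).rank = m := by
  induction m with
  | zero => rfl
  | succ n ih => simp [completeTree, rank, ih]

lemma rank_node_completeTree {t : BTree} {m : ℕ} (h : m < t.rank) :
    (node t (completeTree m)).rank = m + 1 := by
  simp only [rank, rank_completeTree]
  omega

lemma lt_rank_spine {t : BTree} {x : ℕ} (ht : x < t.rank) {ns : List ℕ}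
    (hns : ∀ m ∈ ns, x < m) : x < (spine t ns).rank := by
  induction ns generalizing t with
  | nil => exact ht
  | cons m ns ih =>
    rw [spine_cons]
    refine ih ?_ fun k hk => hns k (List.mem_cons_of_mem m hk)
    simp only [rank, rank_completeTree]
    have := hns m List.mem_cons_self
    omega

lemma security_spine {t : BTree} {ns : List ℕ} (hns : ns.Pairwise (· > ·))
    (ht : ∀ m ∈ ns, m < t.rank) :
    (spine t ns).security =
      t.security + (ns.map fun m => m + 1 + (completeTree m).security).sum := by
  induction ns generalizing t with
  | nil => simp [spine]
  | cons m ns ih =>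
    rw [List.pairwise_cons] at hns
    have hm : (node t (completeTree m)).rank = m + 1 :=
      rank_node_completeTree (ht m List.mem_cons_self)
    have hns' : ∀ k ∈ ns, k < (node t (completeTree m)).rank := fun k hk => by
      have := hns.1 k hk
      omega
    rw [spine_cons, ih hns.2 hns', security, hm, List.map_cons, List.sum_cons]
    ring

lemma security_swap_completeTree {t : BTree} {b : ℕ} (h : b + 1 < t.rank) :
    (node (node t (completeTree (b + 1))) (completeTree b)).security =
      (node (node t (completeTree b)) (completeTree (b + 1))).security := by
  simp only [security, rank, rank_completeTree]
  omega

end BTree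

open BTree in
/-- Here `A = (n₁, …, n_{i−1})`, `a = n_i`, `b = n_{i+1}` and `B = (n_{i+2}, …, n_k)`;
swapping `a` and `b` in the list swaps the subtrees rooted at `c_i` and `c_{i+1}`. -/
theorem security_swap_subtrees_general (a b : ℕ) (A B : List ℕ)
    (hdec : (A ++ a :: b :: B).Chain' (· > ·))
    (hA : A ≠ []) (hab : a = b + 1) :
    (TL (A ++ a :: b :: B)).security = (TL (A ++ b :: a :: B)).security := by
  obtain ⟨n, A, rfl⟩ := List.exists_cons_of_ne_nil hA
  subst hab
  have hsorted : ((n :: A) ++ (b + 1) :: b :: B).Pairwise (· > ·) :=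
    List.isChain_iff_pairwise.mp hdec
  obtain ⟨-, hsuffix, hcross⟩ := List.pairwise_append.mp hsorted
  obtain ⟨hbB, hB⟩ := List.pairwise_cons.mp (List.pairwise_cons.mp hsuffix).2
  have hP : b + 1 < (spine (completeTree n) A).rank :=
    lt_rank_spine (by simpa using hcross n List.mem_cons_self _ List.mem_cons_self)
      fun m hm => hcross m (List.mem_cons_of_mem n hm) _ List.mem_cons_self
  simp only [List.cons_append, TL_cons, spine_append, spine_cons]
  rw [security_spine hB, security_spine hB, security_swap_completeTree hP]
  all_goals
    intro m hm
    have := hbB m hm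
    simp only [rank, rank_completeTree]
    omega

open BTree in
/-- Proposition (flip (1)): let `ℓ ≥ 2` have binary power representation
`L = (n₁, …, n_k)` and suppose `n_i = n_{i+1} + 1` for some `2 ≤ i ≤ k − 1`
(below, `A = (n₁, …, n_{i−1})` is nonempty, `a = n_i`, `b = n_{i+1}`, and `B` is the
rest).  Swapping the complete subtrees rooted at `c_i` and `c_{i+1}` (equivalently,
swapping the entries `n_i` and `n_{i+1}` in the construction of `T_L`) leaves the
security unchanged. -/
theorem security_swap_subtrees (ℓ a b : ℕ) (A B : List ℕ) (hℓ : 2 ≤ ℓ)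
    (hdec : (A ++ a :: b :: B).Chain' (· > ·))
    (hsum : ((A ++ a :: b :: B).map (2 ^ ·)).sum = ℓ)
    (hA : A ≠ []) (hab : a = b + 1) :
    (TL (A ++ a :: b :: B)).security = (TL (A ++ b :: a :: B)).security :=
  security_swap_subtrees_general a b A B hdec hA hab
end
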